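/- arXiv:1805.09408 — 3 statements merged into one kernel-verified Lean document; each statement's English description precedes it below -/
import Mathlib

section
/- Let ε > 0, p > 0, let Ω ⊂ ℝ² be a bounded measurable set, let w : ℝ² → ℝ be a nonnegative bounded measurable even function, and let u : Ω → ℝ be a bounded measurable function. Then ∫_Ω K_{ε,p}(u)(x) · u(x)⁻ dx ≥ 0, where u(x)⁻ = −min(u(x),0). -/
open Real MeasureTheory

/-- The differential kernel `k_{ε,p}(s) = s (s² + ε²)^((p−2)/2)`. -/
noncomputable def kKer (ε p s : ℝ) : ℝ := s * (s ^ 2 + ε ^ 2) ^ ((p - 2) / 2)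

/-- `v` is bounded and measurable (bounded on `Ω`). -/
def BddMeas (Ω : Set (ℝ × ℝ)) (v : ℝ × ℝ → ℝ) : Prop :=
  Measurable v ∧ ∃ M, ∀ x ∈ Ω, |v x| ≤ M

/-- The nonlocal diffusion operator `K_{ε,p}(v)(x) = ∫_Ω w(x−y) k_{ε,p}(v(y)−v(x)) dy`. -/
noncomputable def Knl (ε p : ℝ) (w : ℝ × ℝ → ℝ) (Ω : Set (ℝ × ℝ)) (v : ℝ × ℝ → ℝ)
    (x : ℝ × ℝ) : ℝ :=
  ∫ y in Ω, w (x - y) * kKer ε p (v y - v x)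

/-!
Write `F(x, y) = w(x − y) k_{ε,p}(u(y) − u(x)) u(x)⁻` on `Ω × Ω`. Since `w` is even and `k_{ε,p}` is
odd, `F(x, y) + F(y, x) = w(x − y) k_{ε,p}(u(y) − u(x)) (u(x)⁻ − u(y)⁻)`, which is nonnegative because
`k_{ε,p}(s)` has the sign of `s` and `s ↦ s⁻` is antitone. By Fubini the integral in question is
`∫∫ F`, which equals `∫∫ F ∘ swap`, hence half of the nonnegative `∫∫ (F + F ∘ swap)`.
-/

lemma Monotone.sub_mul_sub_nonneg {R : Type*} [Ring R] [LinearOrder R] [IsOrderedRing R]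
    {f : R → R} (hf : Monotone f) (a b : R) :
    0 ≤ (b - a) * (f b - f a) := by
  rcases le_total a b with h | h
  · exact mul_nonneg (sub_nonneg.2 h) (sub_nonneg.2 (hf h))
  · exact mul_nonneg_of_nonpos_of_nonpos (sub_nonpos.2 h) (sub_nonpos.2 (hf h))

lemma kKer_neg (ε p s : ℝ) : kKer ε p (-s) = -kKer ε p s := by
  simp only [kKer, neg_sq, neg_mul]

lemma kKer_mul_nonneg (ε p : ℝ) {s t : ℝ} (h : 0 ≤ s * t) : 0 ≤ kKer ε p s * t := by
  rw [kKer, mul_right_comm]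
  exact mul_nonneg h (by positivity)

lemma continuous_kKer {ε : ℝ} (hε : ε ≠ 0) (p : ℝ) : Continuous (kKer ε p) :=
  continuous_id.mul <| (by fun_prop : Continuous fun s : ℝ => s ^ 2 + ε ^ 2).rpow_const
    fun _ => Or.inl (by positivity)

section Symmetrization

variable {α : Type*} [MeasurableSpace α] {μ : Measure α}

lemma integral_prod_nonneg_of_add_swap_nonneg [SFinite μ] {F : α × α → ℝ}
    (hF : Integrable F (μ.prod μ)) (h : ∀ z, 0 ≤ F z + F z.swap) :
    0 ≤ ∫ z, F z ∂μ.prod μ := by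
  have hsum : 0 ≤ ∫ z, (F z + F z.swap) ∂μ.prod μ := integral_nonneg fun z => h z
  rw [integral_add hF (hF.swap : Integrable (fun z => F z.swap) _), integral_prod_swap] at hsum
  linarith

lemma integrable_prod_comp_of_ae_abs_le [IsFiniteMeasure μ] {u : α → ℝ} (hu : Measurable u)
    {M : ℝ} (hM : ∀ᵐ x ∂μ, |u x| ≤ M) {Φ : ℝ → ℝ → ℝ} (hΦ : Continuous (Function.uncurry Φ)) :
    Integrable (fun z : α × α => Φ (u z.1) (u z.2)) (μ.prod μ) := by
  obtain ⟨C, hC⟩ := (isCompact_Icc.prod isCompact_Icc).exists_bound_of_continuousOn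
    (s := Set.Icc (-M) M ×ˢ Set.Icc (-M) M) hΦ.continuousOn
  have hmeas : Measurable fun z : α × α => Φ (u z.1) (u z.2) :=
    hΦ.measurable.comp ((hu.comp measurable_fst).prodMk (hu.comp measurable_snd))
  refine Integrable.of_bound hmeas.aestronglyMeasurable C ?_
  filter_upwards [Measure.quasiMeasurePreserving_fst.ae hM,
    Measure.quasiMeasurePreserving_snd.ae hM] with z h₁ h₂
  exact hC (u z.1, u z.2) ⟨abs_le.1 h₁, abs_le.1 h₂⟩

end Symmetrization

lemma kKer_negPart_add_swap_nonneg {G : Type*} [AddGroup G] (ε p : ℝ) {w : G → ℝ}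
    (hwnn : ∀ z, 0 ≤ w z) (hwe : ∀ z, w (-z) = w z) (u : G → ℝ) (x y : G) :
    0 ≤ w (x - y) * (kKer ε p (u y - u x) * -min (u x) 0)
      + w (y - x) * (kKer ε p (u x - u y) * -min (u y) 0) := by
  rw [← neg_sub x y, hwe, ← neg_sub (u y) (u x), kKer_neg, ← mul_add]
  refine mul_nonneg (hwnn _) ?_
  have hmono : Monotone fun a : ℝ => min a 0 := monotone_id.min monotone_const
  exact (kKer_mul_nonneg ε p (hmono.sub_mul_sub_nonneg (u x) (u y))).trans_eq (by ring)

theorem nonlocal_negPart_nonneg_general (ε p : ℝ) (hε : 0 < ε)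
    (Ω : Set (ℝ × ℝ)) (hΩm : MeasurableSet Ω) (hΩb : Bornology.IsBounded Ω)
    (w : ℝ × ℝ → ℝ) (hwm : Measurable w) (hwnn : ∀ z, 0 ≤ w z)
    (hwbd : ∃ M, ∀ z, |w z| ≤ M) (hwe : ∀ z, w (-z) = w z)
    (u : ℝ × ℝ → ℝ) (hu : BddMeas Ω u) :
    0 ≤ ∫ x in Ω, Knl ε p w Ω u x * (-min (u x) 0) := by
  obtain ⟨hum, M, hM⟩ := hu
  obtain ⟨Mw, hMw⟩ := hwbd
  let μ := volume.restrict Ω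
  have : IsFiniteMeasure μ := isFiniteMeasure_restrict.2 hΩb.measure_lt_top.ne
  have hΦ : Continuous (Function.uncurry fun a b : ℝ => kKer ε p (b - a) * -min a 0) :=
    ((continuous_kKer hε.ne' p).comp (continuous_snd.sub continuous_fst)).mul
      (continuous_fst.min continuous_const).neg
  have hF : Integrable
      (fun z : (ℝ × ℝ) × (ℝ × ℝ) => w (z.1 - z.2) * (kKer ε p (u z.2 - u z.1) * -min (u z.1) 0))
      (μ.prod μ) :=
    (integrable_prod_comp_of_ae_abs_le hum ((ae_restrict_mem hΩm).mono hM) hΦ).bdd_mul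
      (hwm.comp (measurable_fst.sub measurable_snd)).aestronglyMeasurable
      (Filter.Eventually.of_forall fun z => hMw _)
  calc 0 ≤ _ := integral_prod_nonneg_of_add_swap_nonneg hF fun z =>
        kKer_negPart_add_swap_nonneg ε p hwnn hwe u z.1 z.2
    _ = ∫ x in Ω, Knl ε p w Ω u x * (-min (u x) 0) := by
        simp only [integral_prod _ hF, Knl, ← integral_mul_const, mul_assoc]; rfl

theorem nonlocal_negPart_nonneg (ε p : ℝ) (hε : 0 < ε) (hp : 0 < p)
    (Ω : Set (ℝ × ℝ)) (hΩm : MeasurableSet Ω) (hΩb : Bornology.IsBounded Ω)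
    (w : ℝ × ℝ → ℝ) (hwm : Measurable w) (hwnn : ∀ z, 0 ≤ w z)
    (hwbd : ∃ M, ∀ z, |w z| ≤ M) (hwe : ∀ z, w (-z) = w z)
    (u : ℝ × ℝ → ℝ) (hu : BddMeas Ω u) :
    0 ≤ ∫ x in Ω, Knl ε p w Ω u x * (-min (u x) 0) :=
  nonlocal_negPart_nonneg_general ε p hε Ω hΩm hΩb w hwm hwnn hwbd hwe u hu
end

section
/- Let ε > 0 and p > 0. (i) For all real numbers a and b, k_{ε,p}(a − b) · ((a−1)⁺ − (b−1)⁺) ≥ 0, where s⁺ = max(s,0). (ii) If Ω ⊂ ℝ² is a bounded measurable set, w : ℝ² → ℝ is a nonnegative bounded measurable even function, and u : Ω → ℝ is bounded measurable, then ∫_Ω K_{ε,p}(u)(x) · (u(x) − 1)⁺ dx ≤ 0. -/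
/-!
The kernel `w` is even and `k_{ε,p}` is odd, so exchanging `x` and `y` in the double integral
`∫∫ w(x−y) k(u y − u x) f(u x)` shows that twice its value is
`−∫∫ w(x−y) k(u x − u y) (f(u x) − f(u y))`, whose integrand is nonnegative for monotone `f`
because `k(s)` has the sign of `s`. With `ε ≠ 0` the kernel `k` is continuous, so all data are
bounded on the bounded set `Ω` and Fubini applies.
-/

open Real MeasureTheory

lemma exists_bound_kKer {ε : ℝ} (hε : ε ≠ 0) (p R : ℝ) :
    ∃ C, ∀ s, |s| ≤ R → |kKer ε p s| ≤ C := by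
  obtain ⟨C, hC⟩ := (isCompact_closedBall (0 : ℝ) R).exists_bound_of_continuousOn
    (continuous_kKer hε p).continuousOn
  exact ⟨C, fun s hs => hC s (by simpa using hs)⟩

lemma kKer_sub_mul_sub_nonneg {f : ℝ → ℝ} (hf : Monotone f) (ε p a b : ℝ) :
    0 ≤ kKer ε p (a - b) * (f a - f b) := by
  have hmono : 0 ≤ (f a - f b) * (a - b) := (monovary_id_iff.2 hf).sub_mul_sub_nonneg b a
  calc (0 : ℝ) ≤ ((a - b) ^ 2 + ε ^ 2) ^ ((p - 2) / 2) * ((f a - f b) * (a - b)) :=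
        mul_nonneg (rpow_nonneg (by positivity) _) hmono
    _ = kKer ε p (a - b) * (f a - f b) := by unfold kKer; ring

lemma integral_integral_nonpos_of_add_swap_nonpos {α : Type*} [MeasurableSpace α]
    {μ : Measure α} [SFinite μ] {F : α → α → ℝ} (hF : Integrable (Function.uncurry F) (μ.prod μ))
    (hswap : ∀ x y, F x y + F y x ≤ 0) : ∫ x, ∫ y, F x y ∂μ ∂μ ≤ 0 := by
  have h2 : 2 * ∫ x, ∫ y, F x y ∂μ ∂μ = ∫ z, (F z.1 z.2 + F z.2 z.1) ∂μ.prod μ := by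
    rw [two_mul]
    nth_rewrite 1 [integral_integral hF]
    rw [integral_integral_symm hF]
    exact (integral_add hF hF.swap).symm
  have : ∫ z, (F z.1 z.2 + F z.2 z.1) ∂μ.prod μ ≤ 0 := integral_nonpos fun z => hswap z.1 z.2
  linarith

lemma BddMeas.monotone_comp {Ω : Set (ℝ × ℝ)} {u : ℝ × ℝ → ℝ} (hu : BddMeas Ω u) {f : ℝ → ℝ}
    (hf : Monotone f) : BddMeas Ω (f ∘ u) := by
  obtain ⟨hu_meas, M, hM⟩ := hu
  refine ⟨hf.measurable.comp hu_meas, |f (-M)| + |f M|, fun x hx => ?_⟩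
  obtain ⟨hlo, hhi⟩ := abs_le.1 (hM x hx)
  have := hf hlo
  have := hf hhi
  simp only [Function.comp_apply, abs_le]
  constructor <;>
    linarith [le_abs_self (f M), neg_abs_le (f (-M)), abs_nonneg (f M), abs_nonneg (f (-M))]

lemma integrable_nonlocal_integrand {ε : ℝ} (hε : ε ≠ 0) (p : ℝ) {Ω : Set (ℝ × ℝ)}
    (hΩ : MeasurableSet Ω) (hΩfin : volume Ω ≠ ⊤) {w : ℝ × ℝ → ℝ} (hw : Measurable w)
    (hw_bdd : ∃ M, ∀ z, |w z| ≤ M) {u g : ℝ × ℝ → ℝ} (hu : BddMeas Ω u) (hg : BddMeas Ω g) :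
    Integrable (Function.uncurry fun x y => w (x - y) * kKer ε p (u y - u x) * g x)
      ((volume.restrict Ω).prod (volume.restrict Ω)) := by
  obtain ⟨Cw, hCw⟩ := hw_bdd
  obtain ⟨hu_meas, M, hM⟩ := hu
  obtain ⟨hg_meas, Cg, hCg⟩ := hg
  obtain ⟨Ck, hCk⟩ := exists_bound_kKer hε p (2 * M)
  have : IsFiniteMeasure (volume.restrict Ω) := isFiniteMeasure_restrict.2 hΩfin
  have hk_meas := (continuous_kKer hε p).measurable
  have hmem : ∀ᵐ z ∂(volume.restrict Ω).prod (volume.restrict Ω), z ∈ Ω ×ˢ Ω := by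
    rw [Measure.prod_restrict]
    exact ae_restrict_mem (hΩ.prod hΩ)
  refine Integrable.of_bound (by fun_prop) (Cw * Ck * Cg) ?_
  filter_upwards [hmem] with ⟨x, y⟩ ⟨hx, hy⟩
  have hk : |kKer ε p (u y - u x)| ≤ Ck :=
    hCk _ ((abs_sub _ _).trans (by linarith [hM x hx, hM y hy]))
  have hCw0 : 0 ≤ Cw := (abs_nonneg _).trans (hCw 0)
  have hCk0 : 0 ≤ Ck := (abs_nonneg _).trans hk
  simp only [Function.uncurry_apply_pair, norm_mul, Real.norm_eq_abs]
  exact mul_le_mul (mul_le_mul (hCw _) hk (abs_nonneg _) hCw0) (hCg x hx) (abs_nonneg _)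
    (mul_nonneg hCw0 hCk0)

lemma integral_Knl_mul_nonpos {ε : ℝ} (hε : ε ≠ 0) (p : ℝ) {Ω : Set (ℝ × ℝ)}
    (hΩ : MeasurableSet Ω) (hΩfin : volume Ω ≠ ⊤) {w : ℝ × ℝ → ℝ} (hw : Measurable w)
    (hw_nonneg : ∀ z, 0 ≤ w z) (hw_bdd : ∃ M, ∀ z, |w z| ≤ M) (hw_even : ∀ z, w (-z) = w z)
    {u : ℝ × ℝ → ℝ} (hu : BddMeas Ω u) {f : ℝ → ℝ} (hf : Monotone f) :
    ∫ x in Ω, Knl ε p w Ω u x * f (u x) ≤ 0 := by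
  have hKnl : ∀ x, Knl ε p w Ω u x * f (u x) =
      ∫ y in Ω, w (x - y) * kKer ε p (u y - u x) * f (u x) :=
    fun x => (integral_mul_const _ _).symm
  simp_rw [hKnl]
  refine integral_integral_nonpos_of_add_swap_nonpos
    (integrable_nonlocal_integrand hε p hΩ hΩfin hw hw_bdd hu (hu.monotone_comp hf)) fun x y => ?_
  have hw_swap : w (y - x) = w (x - y) := by rw [← neg_sub, hw_even]
  have hk_swap : kKer ε p (u x - u y) = -kKer ε p (u y - u x) := by rw [← neg_sub, kKer_neg]
  calc _ = -(w (x - y) * (kKer ε p (u x - u y) * (f (u x) - f (u y)))) := by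
        rw [hw_swap, hk_swap]; ring
    _ ≤ 0 := neg_nonpos.2 (mul_nonneg (hw_nonneg _) (kKer_sub_mul_sub_nonneg hf ε p _ _))

theorem nonlocal_posPart_nonpos_general (ε p : ℝ) (hε : 0 < ε) :
    (∀ a b : ℝ, 0 ≤ kKer ε p (a - b) * (max (a - 1) 0 - max (b - 1) 0)) ∧
    ∀ (Ω : Set (ℝ × ℝ)), MeasurableSet Ω → Bornology.IsBounded Ω →
    ∀ (w : ℝ × ℝ → ℝ), Measurable w → (∀ z, 0 ≤ w z) → (∃ M, ∀ z, |w z| ≤ M) →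
      (∀ z, w (-z) = w z) →
    ∀ (u : ℝ × ℝ → ℝ), BddMeas Ω u →
      ∫ x in Ω, Knl ε p w Ω u x * max (u x - 1) 0 ≤ 0 := by
  have hmono : Monotone fun t : ℝ => max (t - 1) 0 :=
    fun _ _ h => max_le_max_right 0 (sub_le_sub_right h 1)
  exact ⟨kKer_sub_mul_sub_nonneg hmono ε p,
    fun Ω hΩ hΩbdd w hw hw_nonneg hw_bdd hw_even u hu =>
      integral_Knl_mul_nonpos hε.ne' p hΩ hΩbdd.measure_lt_top.ne hw hw_nonneg hw_bdd hw_even hu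
        hmono⟩

theorem nonlocal_posPart_nonpos (ε p : ℝ) (hε : 0 < ε) (hp : 0 < p) :
    (∀ a b : ℝ, 0 ≤ kKer ε p (a - b) * (max (a - 1) 0 - max (b - 1) 0)) ∧
    ∀ (Ω : Set (ℝ × ℝ)), MeasurableSet Ω → Bornology.IsBounded Ω →
    ∀ (w : ℝ × ℝ → ℝ), Measurable w → (∀ z, 0 ≤ w z) → (∃ M, ∀ z, |w z| ≤ M) →
      (∀ z, w (-z) = w z) →
    ∀ (u : ℝ × ℝ → ℝ), BddMeas Ω u →
      ∫ x in Ω, Knl ε p w Ω u x * max (u x - 1) 0 ≤ 0 :=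
  nonlocal_posPart_nonpos_general ε p hε
end

section
/- Let T > 0, r > 0, c ≥ 0 and D ≥ 0. Suppose y : [0,T] → ℝ is differentiable with y(0) = 0, y(t) ≥ 0 for all t ∈ [0,T], and y′(t) + (1/r)·y(t) ≤ c·y(t) + D for all t ∈ [0,T]. Then ∫₀ᵀ y(t) dt ≤ C(T) · r · D, where C(T) = ∫₀ᵀ (c·t·e^{ct} + 1) dt; in particular the bound on ∫₀ᵀ y(t) dt is proportional to r with a constant depending only on c and T. -/
/-!
Comparing `y` with `B t = r D e^{ct}`, the difference `g = y - B` satisfies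
`g' ≤ (c - 1/r) g + D (1 - e^{ct}) ≤ (c - 1/r) g` and `g 0 ≤ 0`, so Grönwall's inequality
gives `y ≤ r D e^{ct}`. Integrating, with `e^{ct} ≤ c t e^{ct} + 1`, yields the bound.
-/

open Set Real

theorem nonpos_of_hasDerivWithinAt_le_mul_self {f f' : ℝ → ℝ} {K a b : ℝ}
    (hf : ContinuousOn f (Icc a b)) (hf' : ∀ x ∈ Ico a b, HasDerivWithinAt f (f' x) (Ici x) x)
    (ha : f a ≤ 0) (bound : ∀ x ∈ Ico a b, f' x ≤ K * f x) :
    ∀ x ∈ Icc a b, f x ≤ 0 := by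
  simpa only [gronwallBound_ε0_δ0] using
    le_gronwallBound_of_liminf_deriv_right_le (ε := 0) hf
      (fun x hx _ hr => (hf' x hx).liminf_right_slope_le hr) ha (by simpa only [add_zero])

theorem le_mul_exp_of_hasDerivAt_add_div_le {y y' : ℝ → ℝ} {T r c D : ℝ} (hr : r ≠ 0)
    (hc : 0 ≤ c) (hD : 0 ≤ D) (hy : ∀ t ∈ Icc 0 T, HasDerivAt y (y' t) t) (h0 : y 0 ≤ r * D)
    (hineq : ∀ t ∈ Ico 0 T, y' t + (1 / r) * y t ≤ c * y t + D) :
    ∀ t ∈ Icc 0 T, y t ≤ r * D * exp (c * t) := by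
  have hB (t : ℝ) : HasDerivAt (fun s => r * D * exp (c * s)) (r * D * (c * exp (c * t))) t := by
    simpa [mul_comm c] using ((hasDerivAt_mul_const c).exp).const_mul (r * D)
  have hg := nonpos_of_hasDerivWithinAt_le_mul_self (K := c - 1 / r)
    (fun t ht => ((hy t ht).sub (hB t)).continuousAt.continuousWithinAt)
    (fun t ht => ((hy t (Ico_subset_Icc_self ht)).sub (hB t)).hasDerivWithinAt)
    (by simpa using h0) (fun t ht => ?_)
  · exact fun t ht => sub_nonpos.1 (hg t ht)
  have hexp : 1 ≤ exp (c * t) := one_le_exp (mul_nonneg hc ht.1)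
  have hBr : 1 / r * (r * D * exp (c * t)) = D * exp (c * t) := by field_simp
  have := hineq t ht
  simp only [Pi.sub_apply]
  nlinarith [mul_le_mul_of_nonneg_left hexp hD]

theorem Real.exp_le_mul_exp_add_one (x : ℝ) : exp x ≤ x * exp x + 1 := by
  have hinv : exp (-x) * exp x = 1 := by rw [← exp_add, neg_add_cancel, exp_zero]
  nlinarith [add_one_le_exp (-x), exp_pos x]

theorem gronwall_integral_bound_general (T r c D : ℝ) (hT : 0 < T) (hr : 0 < r) (hc : 0 ≤ c)
    (hD : 0 ≤ D) (y y' : ℝ → ℝ) (hy : ∀ t ∈ Set.Icc (0:ℝ) T, HasDerivAt y (y' t) t)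
    (h0 : y 0 = 0)
    (hineq : ∀ t ∈ Set.Icc (0:ℝ) T, y' t + (1/r) * y t ≤ c * y t + D) :
    ∫ t in (0:ℝ)..T, y t ≤ (∫ t in (0:ℝ)..T, (c * t * Real.exp (c * t) + 1)) * r * D := by
  have hrD : 0 ≤ r * D := mul_nonneg hr.le hD
  have hbound := le_mul_exp_of_hasDerivAt_add_div_le hr.ne' hc hD hy (h0.trans_le hrD)
    (fun t ht => hineq t (Ico_subset_Icc_self ht))
  have hyint : IntervalIntegrable y MeasureTheory.volume 0 T :=
    ContinuousOn.intervalIntegrable <| by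
      rw [uIcc_of_le hT.le]
      exact fun t ht => (hy t ht).continuousAt.continuousWithinAt
  calc ∫ t in (0:ℝ)..T, y t
      ≤ ∫ t in (0:ℝ)..T, (c * t * exp (c * t) + 1) * (r * D) := by
        refine intervalIntegral.integral_mono_on hT.le hyint
          ((by fun_prop : Continuous _).intervalIntegrable _ _) fun t ht => ?_
        calc y t ≤ r * D * exp (c * t) := hbound t ht
          _ ≤ _ := by
            rw [mul_comm]
            exact mul_le_mul_of_nonneg_right (exp_le_mul_exp_add_one (c * t)) hrD
    _ = _ := by rw [intervalIntegral.integral_mul_const, mul_assoc]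

theorem gronwall_integral_bound (T r c D : ℝ) (hT : 0 < T) (hr : 0 < r) (hc : 0 ≤ c)
    (hD : 0 ≤ D) (y y' : ℝ → ℝ) (hy : ∀ t ∈ Set.Icc (0:ℝ) T, HasDerivAt y (y' t) t)
    (h0 : y 0 = 0) (hnn : ∀ t ∈ Set.Icc (0:ℝ) T, 0 ≤ y t)
    (hineq : ∀ t ∈ Set.Icc (0:ℝ) T, y' t + (1/r) * y t ≤ c * y t + D) :
    ∫ t in (0:ℝ)..T, y t ≤ (∫ t in (0:ℝ)..T, (c * t * Real.exp (c * t) + 1)) * r * D :=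
  gronwall_integral_bound_general T r c D hT hr hc hD y y' hy h0 hineq
end
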